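/- Let F : [0,1] × ℝ² × ℝ² × ℝ² → ℝ be C^∞ and let u ∈ H²([0,1]; ℝ²) with u(0)=u(1), u'(0)=u'(1) be such that for all U ∈ H² with U(0)=U(1)=0 and U'(0)=U'(1)=0, ∫₀¹ [F_u(t,u,u',u'')·U + F_z(t,u,u',u'')·U' + F_Z(t,u,u',u'')·U''] dt = 0, where F_u, F_z, F_Z are integrable along u. Then there exist constants c, C ∈ ℝ² such that F_Z(t,u,u',u'') - Φ(t) = c + C t for a.e. t ∈ (0,1), where Φ(t) = ∫₀^t [ -Ψ(s) + F_z(s,u,u',u'') ] ds and Ψ(t) = ∫₀^t F_u(s,u,u',u'') ds; in particular t ↦ F_Z(t,u(t),u'(t),u''(t)) is absolutely continuous on (0,1). -/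

import Mathlib

open MeasureTheory intervalIntegral
open scoped RealInnerProductSpace

set_option linter.unusedSectionVars false
set_option maxHeartbeats 1000000

section Helpers

variable {E : Type*} [NormedAddCommGroup E] [InnerProductSpace ℝ E] [CompleteSpace E]

lemma aux_inner_int {f w : ℝ → E} (hf : IntegrableOn f (Set.Ioc 0 1))
    (hw : Continuous w) :
    IntegrableOn (fun t => (⟪f t, w t⟫ : ℝ)) (Set.Ioc (0:ℝ) 1) := by
  obtain ⟨M, hM⟩ := isCompact_Icc.exists_bound_of_continuousOn
    (hw.continuousOn : ContinuousOn w (Set.Icc (0:ℝ) 1))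
  refine Integrable.mono' (hf.norm.mul_const M)
    (hf.aestronglyMeasurable.inner hw.aestronglyMeasurable.restrict) ?_
  refine (ae_restrict_iff' measurableSet_Ioc).2 (ae_of_all _ fun t ht => ?_)
  calc ‖(⟪f t, w t⟫ : ℝ)‖ ≤ ‖f t‖ * ‖w t‖ := norm_inner_le_norm _ _
    _ ≤ ‖f t‖ * M := by
        exact mul_le_mul_of_nonneg_left
          (hM t (Set.mem_Icc.2 ⟨ht.1.le, ht.2⟩)) (norm_nonneg _)

lemma aux_smul_int {f : ℝ → E} {ϕ : ℝ → ℝ} (hϕ : Continuous ϕ)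
    (hf : IntegrableOn f (Set.Ioc 0 1)) :
    IntegrableOn (fun t => ϕ t • f t) (Set.Ioc (0:ℝ) 1) := by
  obtain ⟨M, hM⟩ := isCompact_Icc.exists_bound_of_continuousOn
    (hϕ.continuousOn : ContinuousOn ϕ (Set.Icc (0:ℝ) 1))
  refine Integrable.mono' (hf.norm.const_mul M)
    (hϕ.aestronglyMeasurable.restrict.smul hf.aestronglyMeasurable) ?_
  refine (ae_restrict_iff' measurableSet_Ioc).2 (ae_of_all _ fun t ht => ?_)
  rw [norm_smul]
  exact mul_le_mul_of_nonneg_right (hM t (Set.mem_Icc.2 ⟨ht.1.le, ht.2⟩)) (norm_nonneg _)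

lemma aux_int_inner_const {f : ℝ → E} (hf : IntegrableOn f (Set.Ioc 0 1)) (e : E) :
    ∫ t in (0:ℝ)..1, (⟪f t, e⟫ : ℝ) = ⟪∫ t in (0:ℝ)..1, f t, e⟫ := by
  rw [intervalIntegral.integral_of_le zero_le_one,
    intervalIntegral.integral_of_le zero_le_one]
  rw [real_inner_comm]
  rw [← integral_inner hf e]
  exact MeasureTheory.integral_congr_ae (ae_of_all _ fun t => real_inner_comm _ _)

lemma aux_int_const_inner {f : ℝ → E} (hf : IntegrableOn f (Set.Ioc 0 1)) (e : E) :
    ∫ t in (0:ℝ)..1, (⟪e, f t⟫ : ℝ) = ⟪e, ∫ t in (0:ℝ)..1, f t⟫ := by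
  rw [intervalIntegral.integral_of_le zero_le_one,
    intervalIntegral.integral_of_le zero_le_one]
  exact integral_inner hf e

lemma aux_fubini {f v : ℝ → E} (hf : IntegrableOn f (Set.Ioc 0 1)) (hv : Continuous v) :
    ∫ t in (0:ℝ)..1, (⟪∫ s in (0:ℝ)..t, f s, v t⟫ : ℝ)
      = ∫ s in (0:ℝ)..1, (⟪f s, ∫ t in s..(1:ℝ), v t⟫ : ℝ) := by
  set μ : Measure ℝ := volume.restrict (Set.Ioc (0:ℝ) 1) with hμ
  set K : ℝ × ℝ → ℝ :=
    fun p => Set.indicator {q : ℝ × ℝ | q.1 ≤ q.2} (fun q => (⟪f q.1, v q.2⟫ : ℝ)) p with hK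
  obtain ⟨M, hM⟩ := isCompact_Icc.exists_bound_of_continuousOn
    (hv.continuousOn : ContinuousOn v (Set.Icc (0:ℝ) 1))
  have hmeasK : AEStronglyMeasurable K (μ.prod μ) := by
    refine AEStronglyMeasurable.indicator ?_ (measurableSet_le measurable_fst measurable_snd)
    exact (hf.aestronglyMeasurable.comp_fst).inner (hv.aestronglyMeasurable.restrict.comp_snd)
  have hKint : Integrable K (μ.prod μ) := by
    refine Integrable.mono' ((hf.norm).mul_prod (integrable_const M)) hmeasK ?_
    rw [hμ, Measure.prod_restrict]
    refine (ae_restrict_iff' (measurableSet_Ioc.prod measurableSet_Ioc)).2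
      (ae_of_all _ fun p hp => ?_)
    calc ‖K p‖ ≤ ‖(⟪f p.1, v p.2⟫ : ℝ)‖ := norm_indicator_le_norm_self _ _
      _ ≤ ‖f p.1‖ * ‖v p.2‖ := norm_inner_le_norm _ _
      _ ≤ ‖f p.1‖ * M := mul_le_mul_of_nonneg_left
          (hM p.2 (Set.mem_Icc.2 ⟨hp.2.1.le, hp.2.2⟩)) (norm_nonneg _)
  have hL : ∫ t in (0:ℝ)..1, (⟪∫ s in (0:ℝ)..t, f s, v t⟫ : ℝ)
      = ∫ t, (∫ s, K (s, t) ∂μ) ∂μ := by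
    rw [intervalIntegral.integral_of_le zero_le_one]
    refine setIntegral_congr_fun measurableSet_Ioc fun t ht => ?_
    have h1 : ∀ s : ℝ, K (s, t) = Set.indicator (Set.Iic t) (fun s' => (⟪f s', v t⟫ : ℝ)) s := by
      intro s
      simp [hK, Set.indicator_apply, Set.mem_Iic, Set.mem_setOf_eq]
    simp_rw [h1]
    rw [MeasureTheory.integral_indicator measurableSet_Iic, hμ,
      Measure.restrict_restrict measurableSet_Iic]
    have h2 : Set.Iic t ∩ Set.Ioc 0 1 = Set.Ioc 0 t := by
      ext x
      simp only [Set.mem_inter_iff, Set.mem_Iic, Set.mem_Ioc]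
      exact ⟨fun h => ⟨h.2.1, h.1⟩, fun h => ⟨h.2, h.1, h.2.trans ht.2⟩⟩
    rw [h2, intervalIntegral.integral_of_le ht.1.le, real_inner_comm,
      ← integral_inner (hf.mono_set (Set.Ioc_subset_Ioc_right ht.2)) (v t)]
    exact MeasureTheory.integral_congr_ae (ae_of_all _ fun s => real_inner_comm _ _)
  have hR : ∫ s in (0:ℝ)..1, (⟪f s, ∫ t in s..(1:ℝ), v t⟫ : ℝ)
      = ∫ s, (∫ t, K (s, t) ∂μ) ∂μ := by
    rw [intervalIntegral.integral_of_le zero_le_one]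
    refine setIntegral_congr_fun measurableSet_Ioc fun s hs => ?_
    have h1 : ∀ t : ℝ, K (s, t) = Set.indicator (Set.Ici s) (fun t' => (⟪f s, v t'⟫ : ℝ)) t := by
      intro t
      simp [hK, Set.indicator_apply, Set.mem_Ici, Set.mem_setOf_eq]
    simp_rw [h1]
    rw [MeasureTheory.integral_indicator measurableSet_Ici, hμ,
      Measure.restrict_restrict measurableSet_Ici]
    have h2 : Set.Ici s ∩ Set.Ioc 0 1 = Set.Icc s 1 := by
      ext x
      simp only [Set.mem_inter_iff, Set.mem_Ici, Set.mem_Ioc, Set.mem_Icc]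
      exact ⟨fun h => ⟨h.1, h.2.2⟩, fun h => ⟨h.1, hs.1.trans_le h.1, h.2⟩⟩
    rw [h2, integral_inner (hv.integrableOn_Icc) (f s),
      intervalIntegral.integral_of_le hs.2, integral_Icc_eq_integral_Ioc]
  rw [hL, hR]
  exact integral_integral_swap (f := fun t s => K (s, t)) hKint.swap

end Helpers

/-- du Bois-Reymond form of the Euler–Lagrange equation for second-order
variational problems (core of Theorem 8.1): if `u` is a critical path of
`∫ F(t,u,u',u'')` with periodic boundary conditions, tested against all `U` with
`U = U' = 0` at both endpoints, then
`F_Z(t,u,u',u'') - Φ(t) = c + C t` a.e. on `(0,1)`, where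
`Ψ(t) = ∫₀ᵗ F_u` and `Φ(t) = ∫₀ᵗ (-Ψ + F_z)`. -/
theorem du_bois_reymond_second_order
    (F : ℝ → EuclideanSpace ℝ (Fin 2) → EuclideanSpace ℝ (Fin 2) →
      EuclideanSpace ℝ (Fin 2) → ℝ)
    (hF : ContDiff ℝ (⊤ : ℕ∞) (fun p : ℝ × EuclideanSpace ℝ (Fin 2) ×
      EuclideanSpace ℝ (Fin 2) × EuclideanSpace ℝ (Fin 2) =>
      F p.1 p.2.1 p.2.2.1 p.2.2.2))
    (u : ℝ → EuclideanSpace ℝ (Fin 2)) (hu : ContDiff ℝ 2 u)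
    (hper : u 0 = u 1) (hper' : deriv u 0 = deriv u 1)
    (Fu Fz FZ : ℝ → EuclideanSpace ℝ (Fin 2))
    (hFu : ∀ t, Fu t = gradient (fun a => F t a (deriv u t) (deriv (deriv u) t)) (u t))
    (hFz : ∀ t, Fz t = gradient (fun z => F t (u t) z (deriv (deriv u) t)) (deriv u t))
    (hFZ : ∀ t, FZ t = gradient (fun Z => F t (u t) (deriv u t) Z) (deriv (deriv u) t))
    (hFuInt : IntervalIntegrable Fu volume 0 1)
    (hFzInt : IntervalIntegrable Fz volume 0 1)
    (hFZInt : IntervalIntegrable FZ volume 0 1)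
    (hcrit : ∀ U : ℝ → EuclideanSpace ℝ (Fin 2), ContDiff ℝ 2 U →
      U 0 = 0 → U 1 = 0 → deriv U 0 = 0 → deriv U 1 = 0 →
      (∫ t in (0:ℝ)..1,
        (⟪Fu t, U t⟫ + ⟪Fz t, deriv U t⟫ + ⟪FZ t, deriv (deriv U) t⟫)) = 0) :
    ∃ c C : EuclideanSpace ℝ (Fin 2),
      ∀ᵐ t ∂(volume.restrict (Set.Ioo (0:ℝ) 1)),
        FZ t - (∫ s in (0:ℝ)..t, (-(∫ r in (0:ℝ)..s, Fu r) + Fz s)) = c + t • C := by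
  classical
  set Ψ : ℝ → EuclideanSpace ℝ (Fin 2) := fun t => ∫ r in (0:ℝ)..t, Fu r with hΨdef
  set Φ : ℝ → EuclideanSpace ℝ (Fin 2) := fun t => ∫ s in (0:ℝ)..t, (-Ψ s + Fz s) with hΦdef
  set G : ℝ → EuclideanSpace ℝ (Fin 2) := fun t => FZ t - Φ t with hGdef
  -- basic integrability
  have hFu' : IntegrableOn Fu (Set.Ioc 0 1) :=
    (intervalIntegrable_iff_integrableOn_Ioc_of_le zero_le_one).1 hFuInt
  have hFz' : IntegrableOn Fz (Set.Ioc 0 1) :=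
    (intervalIntegrable_iff_integrableOn_Ioc_of_le zero_le_one).1 hFzInt
  have hFZ' : IntegrableOn FZ (Set.Ioc 0 1) :=
    (intervalIntegrable_iff_integrableOn_Ioc_of_le zero_le_one).1 hFZInt
  have hFuIcc : IntegrableOn Fu (Set.Icc 0 1) :=
    (integrableOn_Icc_iff_integrableOn_Ioc).2 hFu'
  have hΨcont : ContinuousOn Ψ (Set.Icc 0 1) := by
    have := intervalIntegral.continuousOn_primitive_interval
      (a := (0:ℝ)) (b := (1:ℝ)) (μ := volume) (f := Fu)
      (by rwa [Set.uIcc_of_le zero_le_one])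
    rwa [Set.uIcc_of_le zero_le_one] at this
  have hΨIcc : IntegrableOn Ψ (Set.Icc 0 1) :=
    hΨcont.integrableOn_compact isCompact_Icc
  have hΨint : IntegrableOn Ψ (Set.Ioc 0 1) := hΨIcc.mono_set Set.Ioc_subset_Icc_self
  have hmix : IntegrableOn (fun s => -Ψ s + Fz s) (Set.Ioc 0 1) := hΨint.neg.add hFz'
  have hmixIcc : IntegrableOn (fun s => -Ψ s + Fz s) (Set.Icc 0 1) :=
    hΨIcc.neg.add ((integrableOn_Icc_iff_integrableOn_Ioc).2 hFz')
  have hΦcont : ContinuousOn Φ (Set.Icc 0 1) := by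
    have := intervalIntegral.continuousOn_primitive_interval
      (a := (0:ℝ)) (b := (1:ℝ)) (μ := volume) (f := fun s => -Ψ s + Fz s)
      (by rwa [Set.uIcc_of_le zero_le_one])
    rwa [Set.uIcc_of_le zero_le_one] at this
  have hΦint : IntegrableOn Φ (Set.Ioc 0 1) :=
    (hΦcont.integrableOn_compact isCompact_Icc).mono_set Set.Ioc_subset_Icc_self
  have hGint : IntegrableOn G (Set.Ioc 0 1) := hFZ'.sub hΦint
  -- Step 1: orthogonality of G to second derivatives of admissible test paths
  have key : ∀ U : ℝ → EuclideanSpace ℝ (Fin 2), ContDiff ℝ 2 U →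
      U 0 = 0 → U 1 = 0 → deriv U 0 = 0 → deriv U 1 = 0 →
      (∫ t in (0:ℝ)..1, (⟪G t, deriv (deriv U) t⟫ : ℝ)) = 0 := by
    intro U hU h0 h1 h0' h1'
    have hU2 : ContDiff ℝ ((1 : WithTop ℕ∞) + 1) U := by
      rw [show ((1 : WithTop ℕ∞) + 1) = 2 from by norm_num]; exact hU
    have hUdiff : Differentiable ℝ U := (contDiff_succ_iff_deriv.1 hU2).1
    have hd : ContDiff ℝ 1 (deriv U) := (contDiff_succ_iff_deriv.1 hU2).2.2
    have hU'diff : Differentiable ℝ (deriv U) := hd.differentiable one_ne_zero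
    have hU''cont : Continuous (deriv (deriv U)) := (contDiff_one_iff_deriv.1 hd).2
    have hUcont : Continuous U := hUdiff.continuous
    have hU'cont : Continuous (deriv U) := hU'diff.continuous
    have ftc1 : ∀ s : ℝ, ∫ t in s..(1:ℝ), deriv U t = U 1 - U s := fun s =>
      integral_deriv_eq_sub (fun x _ => hUdiff x) (hU'cont.intervalIntegrable _ _)
    have ftc2 : ∀ s : ℝ, ∫ t in s..(1:ℝ), deriv (deriv U) t = deriv U 1 - deriv U s := fun s =>
      integral_deriv_eq_sub (fun x _ => hU'diff x) (hU''cont.intervalIntegrable _ _)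
    -- interval integrability of all the inner products
    have iFuU : IntervalIntegrable (fun t => (⟪Fu t, U t⟫ : ℝ)) volume 0 1 :=
      (intervalIntegrable_iff_integrableOn_Ioc_of_le zero_le_one).2 (aux_inner_int hFu' hUcont)
    have iFzU' : IntervalIntegrable (fun t => (⟪Fz t, deriv U t⟫ : ℝ)) volume 0 1 :=
      (intervalIntegrable_iff_integrableOn_Ioc_of_le zero_le_one).2 (aux_inner_int hFz' hU'cont)
    have iFZU'' : IntervalIntegrable (fun t => (⟪FZ t, deriv (deriv U) t⟫ : ℝ)) volume 0 1 :=
      (intervalIntegrable_iff_integrableOn_Ioc_of_le zero_le_one).2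
        (aux_inner_int hFZ' hU''cont)
    have iΦU'' : IntervalIntegrable (fun t => (⟪Φ t, deriv (deriv U) t⟫ : ℝ)) volume 0 1 :=
      (intervalIntegrable_iff_integrableOn_Ioc_of_le zero_le_one).2
        (aux_inner_int hΦint hU''cont)
    have iΨU' : IntervalIntegrable (fun t => (⟪Ψ t, deriv U t⟫ : ℝ)) volume 0 1 :=
      (intervalIntegrable_iff_integrableOn_Ioc_of_le zero_le_one).2
        (aux_inner_int hΨint hU'cont)
    -- integration by parts via Fubini
    have eΨ : (∫ t in (0:ℝ)..1, (⟪Ψ t, deriv U t⟫ : ℝ))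
        = -∫ t in (0:ℝ)..1, (⟪Fu t, U t⟫ : ℝ) := by
      rw [hΨdef, aux_fubini hFu' hU'cont]
      rw [← intervalIntegral.integral_neg]
      refine intervalIntegral.integral_congr fun s _ => ?_
      rw [ftc1 s, h1, zero_sub, inner_neg_right]
    have eΦ : (∫ t in (0:ℝ)..1, (⟪Φ t, deriv (deriv U) t⟫ : ℝ))
        = (∫ t in (0:ℝ)..1, (⟪Ψ t, deriv U t⟫ : ℝ))
          - ∫ t in (0:ℝ)..1, (⟪Fz t, deriv U t⟫ : ℝ) := by
      rw [hΦdef, aux_fubini hmix hU''cont]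
      rw [← intervalIntegral.integral_sub iΨU' iFzU']
      refine intervalIntegral.integral_congr fun s _ => ?_
      rw [ftc2 s, h1', zero_sub, inner_neg_right, inner_add_left, inner_neg_left]
      ring
    have hsplit := hcrit U hU h0 h1 h0' h1'
    rw [intervalIntegral.integral_add (iFuU.add iFzU') iFZU'',
      intervalIntegral.integral_add iFuU iFzU'] at hsplit
    have hGsplit : (∫ t in (0:ℝ)..1, (⟪G t, deriv (deriv U) t⟫ : ℝ))
        = (∫ t in (0:ℝ)..1, (⟪FZ t, deriv (deriv U) t⟫ : ℝ))
          - ∫ t in (0:ℝ)..1, (⟪Φ t, deriv (deriv U) t⟫ : ℝ) := by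
      rw [← intervalIntegral.integral_sub iFZU'' iΦU'']
      exact intervalIntegral.integral_congr fun t _ => by rw [hGdef]; exact inner_sub_left _ _ _
    rw [hGsplit, eΦ, eΨ]
    linarith
  -- Step 2: choice of constants
  set M0 : EuclideanSpace ℝ (Fin 2) := ∫ t in (0:ℝ)..1, G t with hM0
  set M1 : EuclideanSpace ℝ (Fin 2) := ∫ t in (0:ℝ)..1, t • G t with hM1
  set c : EuclideanSpace ℝ (Fin 2) := (4:ℝ) • M0 - (6:ℝ) • M1 with hc
  set C : EuclideanSpace ℝ (Fin 2) := (12:ℝ) • M1 - (6:ℝ) • M0 with hC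
  set g : ℝ → EuclideanSpace ℝ (Fin 2) := fun t => G t - (c + t • C) with hgdef
  have haffc : ∀ (x y : EuclideanSpace ℝ (Fin 2)),
      Continuous (fun t : ℝ => x + t • y) :=
    fun x y => continuous_const.add (continuous_id.smul continuous_const)
  have hts : ∀ (w : ℝ → EuclideanSpace ℝ (Fin 2)), Continuous w →
      Continuous (fun t : ℝ => t • w t) := fun w hw => continuous_id.smul hw
  have htsint : ∀ (f : ℝ → EuclideanSpace ℝ (Fin 2)), IntegrableOn f (Set.Ioc 0 1) →
      IntegrableOn (fun t : ℝ => t • f t) (Set.Ioc (0:ℝ) 1) :=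
    fun f h => aux_smul_int continuous_id h
  have haff : ∀ (x y : EuclideanSpace ℝ (Fin 2)),
      ∫ t in (0:ℝ)..1, (x + t • y) = x + (2⁻¹ : ℝ) • y := by
    intro x y
    have h1 : IntervalIntegrable (fun t : ℝ => t • y) volume 0 1 :=
      (hts _ continuous_const).intervalIntegrable _ _
    have h2 : ∀ t : ℝ, t • y = (fun s : ℝ => s) t • y := fun t => rfl
    rw [intervalIntegral.integral_add intervalIntegrable_const h1,
      intervalIntegral.integral_const]
    simp_rw [h2]
    rw [intervalIntegral.integral_smul_const, integral_id]
    norm_num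
  have htaff : ∀ (x y : EuclideanSpace ℝ (Fin 2)),
      ∫ t in (0:ℝ)..1, t • (x + t • y) = (2⁻¹:ℝ) • x + (3⁻¹:ℝ) • y := by
    intro x y
    have : ∀ t : ℝ, t • (x + t • y) = t • x + (t ^ 2) • y := by
      intro t; rw [smul_add, smul_smul, ← pow_two]
    simp_rw [this]
    have h1 : IntervalIntegrable (fun t : ℝ => t • x) volume 0 1 :=
      (hts _ continuous_const).intervalIntegrable _ _
    have h2 : IntervalIntegrable (fun t : ℝ => (t ^ 2) • y) volume 0 1 :=
      ((continuous_pow 2).smul continuous_const).intervalIntegrable _ _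
    have h3 : ∀ t : ℝ, t • x = (fun s : ℝ => s) t • x := fun t => rfl
    have h4 : ∀ t : ℝ, (t ^ 2) • y = (fun s : ℝ => s ^ 2) t • y := fun t => rfl
    rw [intervalIntegral.integral_add h1 h2]
    simp_rw [h3, h4]
    rw [intervalIntegral.integral_smul_const, intervalIntegral.integral_smul_const,
      integral_id, integral_pow]
    norm_num
  have hg_int : IntegrableOn g (Set.Ioc 0 1) :=
    hGint.sub (((haffc c C).integrableOn_Icc).mono_set Set.Ioc_subset_Icc_self)
  have hGii : IntervalIntegrable G volume 0 1 :=
    (intervalIntegrable_iff_integrableOn_Ioc_of_le zero_le_one).2 hGint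
  have hgint0 : ∫ t in (0:ℝ)..1, g t = 0 := by
    rw [hgdef]
    rw [intervalIntegral.integral_sub hGii ((haffc c C).intervalIntegrable _ _), haff]
    rw [← hM0, hc, hC]
    module
  have hgint1 : ∫ t in (0:ℝ)..1, t • g t = 0 := by
    have : ∀ t : ℝ, t • g t = t • G t - t • (c + t • C) := by
      intro t; rw [hgdef]; exact smul_sub _ _ _
    simp_rw [this]
    have i1 : IntervalIntegrable (fun t : ℝ => t • G t) volume 0 1 :=
      (intervalIntegrable_iff_integrableOn_Ioc_of_le zero_le_one).2 (htsint G hGint)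
    have i2 : IntervalIntegrable (fun t : ℝ => t • (c + t • C)) volume 0 1 :=
      (hts _ (haffc c C)).intervalIntegrable _ _
    rw [intervalIntegral.integral_sub i1 i2, htaff]
    rw [← hM1, hc, hC]
    module
  -- Step 3: orthogonality of g to all continuous test functions
  have key2 : ∀ ψ : ℝ → EuclideanSpace ℝ (Fin 2), Continuous ψ →
      (∫ t in (0:ℝ)..1, (⟪g t, ψ t⟫ : ℝ)) = 0 := by
    intro ψ hψ
    set P0 : EuclideanSpace ℝ (Fin 2) := ∫ t in (0:ℝ)..1, ψ t with hP0
    set P1 : EuclideanSpace ℝ (Fin 2) := ∫ t in (0:ℝ)..1, t • ψ t with hP1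
    set a : EuclideanSpace ℝ (Fin 2) := (4:ℝ) • P0 - (6:ℝ) • P1 with ha
    set b : EuclideanSpace ℝ (Fin 2) := (12:ℝ) • P1 - (6:ℝ) • P0 with hb
    set ψt : ℝ → EuclideanSpace ℝ (Fin 2) := fun t => ψ t - (a + t • b) with hψtdef
    have hψtc : Continuous ψt := hψ.sub (haffc a b)
    have hψt0 : ∫ t in (0:ℝ)..1, ψt t = 0 := by
      rw [hψtdef]
      rw [intervalIntegral.integral_sub (hψ.intervalIntegrable _ _)
        ((haffc a b).intervalIntegrable _ _), haff, ← hP0, ha, hb]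
      module
    have hψt1 : ∫ t in (0:ℝ)..1, t • ψt t = 0 := by
      have : ∀ t : ℝ, t • ψt t = t • ψ t - t • (a + t • b) := by
        intro t; rw [hψtdef]; exact smul_sub _ _ _
      simp_rw [this]
      have i1 : IntervalIntegrable (fun t : ℝ => t • ψ t) volume 0 1 :=
        (hts _ hψ).intervalIntegrable _ _
      have i2 : IntervalIntegrable (fun t : ℝ => t • (a + t • b)) volume 0 1 :=
        (hts _ (haffc a b)).intervalIntegrable _ _
      rw [intervalIntegral.integral_sub i1 i2, htaff, ← hP1, ha, hb]
      module
    -- the test path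
    set W : ℝ → EuclideanSpace ℝ (Fin 2) := fun t => ∫ s in (0:ℝ)..t, ψt s with hWdef
    set W2 : ℝ → EuclideanSpace ℝ (Fin 2) := fun t => ∫ s in (0:ℝ)..t, s • ψt s with hW2def
    have hWd : ∀ t, HasDerivAt W (ψt t) t := fun t =>
      intervalIntegral.integral_hasDerivAt_right (hψtc.intervalIntegrable _ _)
        (hψtc.stronglyMeasurableAtFilter _ _) hψtc.continuousAt
    have hψtsc : Continuous (fun s : ℝ => s • ψt s) := hts _ hψtc
    have hW2d : ∀ t, HasDerivAt W2 (t • ψt t) t := fun t =>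
      intervalIntegral.integral_hasDerivAt_right (hψtsc.intervalIntegrable _ _)
        (hψtsc.stronglyMeasurableAtFilter _ _) hψtsc.continuousAt
    set U : ℝ → EuclideanSpace ℝ (Fin 2) := fun t => t • W t - W2 t with hUdef
    have hUd : ∀ t, HasDerivAt U (W t) t := by
      intro t
      have h := (((hasDerivAt_id t).smul (hWd t)).sub (hW2d t))
      simp only [one_smul, id_eq] at h
      rw [show W t = t • ψt t + W t - t • ψt t from (add_sub_cancel_left _ _).symm]
      exact h
    have hdU : deriv U = W := funext fun t => (hUd t).deriv
    have hdW : deriv W = ψt := funext fun t => (hWd t).deriv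
    have hUC2 : ContDiff ℝ 2 U := by
      rw [show (2 : WithTop ℕ∞) = 1 + 1 from by norm_num, contDiff_succ_iff_deriv]
      refine ⟨fun t => (hUd t).differentiableAt, by simp, ?_⟩
      rw [hdU, contDiff_one_iff_deriv]
      exact ⟨fun t => (hWd t).differentiableAt, by rw [hdW]; exact hψtc⟩
    have hW0 : W 0 = 0 := by rw [hWdef]; simp
    have hW1 : W 1 = 0 := hψt0
    have hU0 : U 0 = 0 := by rw [hUdef]; simp [hW2def]
    have hU1 : U 1 = 0 := by
      rw [hUdef]
      simp only [one_smul]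
      rw [hW1, show W2 1 = 0 from hψt1]
      simp
    have hdU0 : deriv U 0 = 0 := by rw [hdU]; exact hW0
    have hdU1 : deriv U 1 = 0 := by rw [hdU]; exact hW1
    have hGψt : ∫ t in (0:ℝ)..1, (⟪G t, ψt t⟫ : ℝ) = 0 := by
      have h := key U hUC2 hU0 hU1 hdU0 hdU1
      rwa [hdU, hdW] at h
    -- expand the integrand
    have e1 : ∀ t : ℝ, (⟪g t, ψ t⟫ : ℝ)
        = ((⟪G t, ψt t⟫ : ℝ) - ((⟪c, ψt t⟫ : ℝ) + (⟪C, t • ψt t⟫ : ℝ)))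
          + ((⟪g t, a⟫ : ℝ) + (⟪t • g t, b⟫ : ℝ)) := by
      intro t
      simp only [hgdef, hψtdef, inner_sub_left, inner_sub_right, inner_add_left,
        inner_add_right, real_inner_smul_left, real_inner_smul_right]
      ring
    have iGψt : IntervalIntegrable (fun t => (⟪G t, ψt t⟫ : ℝ)) volume 0 1 :=
      (intervalIntegrable_iff_integrableOn_Ioc_of_le zero_le_one).2 (aux_inner_int hGint hψtc)
    have icψt : IntervalIntegrable (fun t => (⟪c, ψt t⟫ : ℝ)) volume 0 1 :=
      ((continuous_const.inner hψtc)).intervalIntegrable _ _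
    have iCψt : IntervalIntegrable (fun t => (⟪C, t • ψt t⟫ : ℝ)) volume 0 1 :=
      ((continuous_const.inner (hts _ hψtc))).intervalIntegrable _ _
    have iga : IntervalIntegrable (fun t => (⟪g t, a⟫ : ℝ)) volume 0 1 :=
      (intervalIntegrable_iff_integrableOn_Ioc_of_le zero_le_one).2
        (aux_inner_int hg_int continuous_const)
    have hsmψt : IntegrableOn (fun t : ℝ => t • ψt t) (Set.Ioc (0:ℝ) 1) :=
      (hψtsc.integrableOn_Icc).mono_set Set.Ioc_subset_Icc_self
    have hsmg : IntegrableOn (fun t : ℝ => t • g t) (Set.Ioc (0:ℝ) 1) := htsint g hg_int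
    have itgb : IntervalIntegrable (fun t => (⟪t • g t, b⟫ : ℝ)) volume 0 1 :=
      (intervalIntegrable_iff_integrableOn_Ioc_of_le zero_le_one).2
        (aux_inner_int hsmg continuous_const)
    calc (∫ t in (0:ℝ)..1, (⟪g t, ψ t⟫ : ℝ))
        = ∫ t in (0:ℝ)..1, (((⟪G t, ψt t⟫ : ℝ) - ((⟪c, ψt t⟫ : ℝ) + (⟪C, t • ψt t⟫ : ℝ)))
          + ((⟪g t, a⟫ : ℝ) + (⟪t • g t, b⟫ : ℝ))) :=
          intervalIntegral.integral_congr fun t _ => e1 t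
      _ = 0 := by
          rw [intervalIntegral.integral_add (iGψt.sub (icψt.add iCψt)) (iga.add itgb),
            intervalIntegral.integral_sub iGψt (icψt.add iCψt),
            intervalIntegral.integral_add icψt iCψt,
            intervalIntegral.integral_add iga itgb,
            hGψt,
            aux_int_const_inner (hψtc.integrableOn_Icc.mono_set Set.Ioc_subset_Icc_self) c,
            aux_int_const_inner hsmψt C,
            aux_int_inner_const hg_int a,
            aux_int_inner_const hsmg b,
            hψt0, hψt1, hgint0, hgint1]
          simp
  -- Step 4: conclude by the distributional vanishing lemma
  refine ⟨c, C, ?_⟩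
  have hg_int_Ioo : Integrable g (volume.restrict (Set.Ioo (0:ℝ) 1)) :=
    hg_int.mono_set Set.Ioo_subset_Ioc_self
  have hloc : LocallyIntegrable g (volume.restrict (Set.Ioo (0:ℝ) 1)) :=
    hg_int_Ioo.locallyIntegrable
  have hzero : ∀ᵐ t ∂(volume.restrict (Set.Ioo (0:ℝ) 1)), g t = 0 := by
    refine ae_eq_zero_of_integral_contDiff_smul_eq_zero hloc ?_
    intro ϕ hϕ hϕsupp
    have hϕc : Continuous ϕ := hϕ.continuous
    set I : EuclideanSpace ℝ (Fin 2) :=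
      ∫ x, ϕ x • g x ∂(volume.restrict (Set.Ioo (0:ℝ) 1)) with hI
    have hIeq : ∫ t in (0:ℝ)..1, ϕ t • g t = I := by
      rw [intervalIntegral.integral_of_le zero_le_one, hI, integral_Ioc_eq_integral_Ioo]
    have h2 := key2 (fun t => ϕ t • I) (hϕc.smul continuous_const)
    have h3 : ∀ t : ℝ, (⟪g t, ϕ t • I⟫ : ℝ) = (⟪ϕ t • g t, I⟫ : ℝ) := by
      intro t
      rw [real_inner_smul_left, real_inner_smul_right]
    have hcongr : (∫ t in (0:ℝ)..1, (⟪g t, ϕ t • I⟫ : ℝ))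
        = ∫ t in (0:ℝ)..1, (⟪ϕ t • g t, I⟫ : ℝ) :=
      intervalIntegral.integral_congr fun t _ => h3 t
    have hϕg : IntegrableOn (fun t : ℝ => ϕ t • g t) (Set.Ioc (0:ℝ) 1) :=
      aux_smul_int hϕc hg_int
    have h5 : ∫ t in (0:ℝ)..1, (⟪ϕ t • g t, I⟫ : ℝ) = 0 := hcongr.symm.trans h2
    have h4 : (⟪I, I⟫ : ℝ) = 0 := by
      rw [aux_int_inner_const hϕg I, hIeq] at h5
      exact h5
    exact inner_self_eq_zero.1 h4
  filter_upwards [hzero] with t ht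
  have ht' : G t - (c + t • C) = 0 := ht
  have := sub_eq_zero.1 ht'
  rw [hGdef] at this
  calc FZ t - Φ t = G t := rfl
    _ = c + t • C := sub_eq_zero.1 ht'
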